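/- arXiv:2604.11985 — 2 statements merged into one kernel-verified Lean document; each statement's English description precedes it below -/
import Mathlib

section
/- Let L > 0, L₁ > 0 and 0 < ℓ < ℓ₁ ≤ L₁ be real numbers. Let Q = {(x, y) ∈ ℝ² : 0 ≤ x ≤ L and 0 ≤ y ≤ ((ℓ₁ − ℓ)/L)·x + ℓ} and v(x, y) = ℓ·y / (((ℓ₁ − ℓ)/L)·x + ℓ). Then the Dirichlet integral ∫_Q [ (∂v/∂x)² + (∂v/∂y)² ] dx dy is at most (L + L₁²/(3L)) · ℓ. -/
/-!
With `s = (ℓ₁ - ℓ) / L` and `g x = s * x + ℓ`, the gradient of `v` is `(-ℓ s y / g², ℓ / g)`.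
Integrating its square first in `y ∈ [0, g x]` gives `ℓ² (s²/3 + 1) / g x`, and then in
`x ∈ [0, L]` gives `ℓ² (s²/3 + 1) / s * log (ℓ₁ / ℓ)`. The bound follows from
`log (ℓ₁ / ℓ) ≤ (ℓ₁ - ℓ) / ℓ = s L / ℓ` and `0 < ℓ₁ - ℓ ≤ L₁`.
-/

open MeasureTheory Set Real

theorem isCompact_region_between_cc {α : Type*} [TopologicalSpace α] [T2Space α]
    {f g : α → ℝ} {s : Set α} (hs : IsCompact s) (hf : Continuous f) (hg : Continuous g) :
    IsCompact {p : α × ℝ | p.1 ∈ s ∧ p.2 ∈ Icc (f p.1) (g p.1)} := by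
  obtain ⟨m, hm⟩ := hs.bddBelow_image hf.continuousOn
  obtain ⟨M, hM⟩ := hs.bddAbove_image hg.continuousOn
  refine (hs.prod (isCompact_Icc (a := m) (b := M))).of_isClosed_subset ?_ ?_
  · exact (hs.isClosed.preimage continuous_fst).inter
      ((isClosed_le (hf.comp continuous_fst) continuous_snd).inter
        (isClosed_le continuous_snd (hg.comp continuous_fst)))
  · rintro ⟨x, y⟩ ⟨hx, hfy, hyg⟩
    exact ⟨hx, (hm (mem_image_of_mem f hx)).trans hfy, hyg.trans (hM (mem_image_of_mem g hx))⟩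

theorem setIntegral_region_between_cc {α : Type*} [MeasurableSpace α] {μ : Measure α} [SFinite μ]
    {f g : α → ℝ} {s : Set α} {F : α × ℝ → ℝ} (hf : Measurable f) (hg : Measurable g)
    (hs : MeasurableSet s)
    (hF : IntegrableOn F {p : α × ℝ | p.1 ∈ s ∧ p.2 ∈ Icc (f p.1) (g p.1)} (μ.prod volume)) :
    ∫ p in {p : α × ℝ | p.1 ∈ s ∧ p.2 ∈ Icc (f p.1) (g p.1)}, F p ∂(μ.prod volume) =
      ∫ x in s, (∫ y in Icc (f x) (g x), F (x, y)) ∂μ := by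
  have hR := measurableSet_region_between_cc hf hg hs
  rw [← integral_indicator hR, integral_prod _ ((integrable_indicator_iff hR).2 hF),
    ← integral_indicator hs]
  congr 1 with x
  by_cases hx : x ∈ s
  · rw [indicator_of_mem hx, ← integral_indicator measurableSet_Icc]
    congr 1 with y
    simp only [indicator, mem_ofPred_eq, hx, true_and]
  · simp [indicator, hx]

theorem deriv_const_div_affine (a s c x : ℝ) (h : s * x + c ≠ 0) :
    deriv (fun x => a / (s * x + c)) x = -(a * s) / (s * x + c) ^ 2 := by
  have := ((hasDerivAt_id x).const_mul s |>.add_const c).inv h |>.const_mul a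
  convert this.deriv using 1
  · simp [div_eq_mul_inv]
  · simp only [mul_one, id_eq]; ring

theorem sq_deriv_add_sq_deriv_mul_div_affine (a s c : ℝ) (p : ℝ × ℝ) (h : s * p.1 + c ≠ 0) :
    deriv (fun x => a * p.2 / (s * x + c)) p.1 ^ 2 + deriv (fun y => a * y / (s * p.1 + c)) p.2 ^ 2
      = (a * s / (s * p.1 + c) ^ 2) ^ 2 * p.2 ^ 2 + (a / (s * p.1 + c)) ^ 2 := by
  rw [deriv_const_div_affine _ _ _ _ h, deriv_div_const, deriv_const_mul_id']
  ring

theorem integral_Icc_zero_mul_sq_add (α β c : ℝ) (hc : 0 ≤ c) :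
    ∫ y in Icc 0 c, (α * y ^ 2 + β) = α * c ^ 3 / 3 + β * c := by
  rw [integral_Icc_eq_integral_Ioc, ← intervalIntegral.integral_of_le hc,
    intervalIntegral.integral_add ((intervalIntegral.intervalIntegrable_pow 2).const_mul α)
      intervalIntegrable_const,
    intervalIntegral.integral_const_mul, integral_pow, intervalIntegral.integral_const, smul_eq_mul]
  ring

theorem integral_Icc_zero_div_affine (K s c L : ℝ) (hs : 0 < s) (hc : 0 < c) (hL : 0 ≤ L) :
    ∫ x in Icc 0 L, K / (s * x + c) = K / s * log ((s * L + c) / c) := by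
  rw [integral_Icc_eq_integral_Ioc, ← intervalIntegral.integral_of_le hL]
  simp only [div_eq_mul_inv K, intervalIntegral.integral_const_mul]
  rw [intervalIntegral.integral_comp_mul_add (fun x => x⁻¹) hs.ne',
    integral_inv_of_pos (by simpa) (by positivity)]
  simp only [mul_zero, zero_add, smul_eq_mul]
  ring

theorem setIntegral_trapezoid_sq_div_affine (a s c L : ℝ) (hs : 0 < s) (hc : 0 < c) (hL : 0 ≤ L) :
    ∫ p in {p : ℝ × ℝ | p.1 ∈ Icc 0 L ∧ p.2 ∈ Icc 0 (s * p.1 + c)},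
        ((a * s / (s * p.1 + c) ^ 2) ^ 2 * p.2 ^ 2 + (a / (s * p.1 + c)) ^ 2) =
      a ^ 2 * (s ^ 2 / 3 + 1) / s * log ((s * L + c) / c) := by
  have hpos : ∀ x ∈ Icc 0 L, 0 < s * x + c := fun x hx => by nlinarith [hx.1]
  have hint : IntegrableOn
      (fun p : ℝ × ℝ => (a * s / (s * p.1 + c) ^ 2) ^ 2 * p.2 ^ 2 + (a / (s * p.1 + c)) ^ 2)
      {p : ℝ × ℝ | p.1 ∈ Icc 0 L ∧ p.2 ∈ Icc 0 (s * p.1 + c)} := by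
    refine ContinuousOn.integrableOn_compact (isCompact_region_between_cc isCompact_Icc
      continuous_const (g := fun x => s * x + c) (by fun_prop)) fun p hp => ?_
    have := hpos p.1 hp.1
    exact ContinuousAt.continuousWithinAt (by fun_prop (disch := positivity))
  rw [Measure.volume_eq_prod] at hint ⊢
  rw [setIntegral_region_between_cc measurable_const (g := fun x => s * x + c) (by fun_prop)
    measurableSet_Icc hint, ← integral_Icc_zero_div_affine _ _ _ _ hs hc hL]
  refine setIntegral_congr_fun measurableSet_Icc fun x hx => ?_
  have := hpos x hx
  dsimp only
  rw [integral_Icc_zero_mul_sq_add _ _ _ this.le]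
  field_simp

theorem stmt_4_general (L L₁ ℓ ℓ₁ : ℝ) (hL : 0 < L)
    (hℓ : 0 < ℓ) (hℓ₁ : ℓ < ℓ₁) (hℓ₁L₁ : ℓ₁ ≤ L₁)
    (Q : Set (ℝ × ℝ))
    (hQ : Q = {p : ℝ × ℝ | 0 ≤ p.1 ∧ p.1 ≤ L ∧ 0 ≤ p.2 ∧
      p.2 ≤ ((ℓ₁ - ℓ) / L) * p.1 + ℓ})
    (v : ℝ × ℝ → ℝ)
    (hv : v = fun p : ℝ × ℝ => ℓ * p.2 / (((ℓ₁ - ℓ) / L) * p.1 + ℓ)) :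
    (∫ p in Q, ((deriv (fun x : ℝ => v (x, p.2)) p.1) ^ 2 +
        (deriv (fun y : ℝ => v (p.1, y)) p.2) ^ 2)) ≤
      (L + L₁ ^ 2 / (3 * L)) * ℓ := by
  subst hv
  set s := (ℓ₁ - ℓ) / L
  have hs : 0 < s := div_pos (by linarith) hL
  have hsL : s * L = ℓ₁ - ℓ := div_mul_cancel₀ _ hL.ne'
  have hQ' : Q = {p : ℝ × ℝ | p.1 ∈ Icc 0 L ∧ p.2 ∈ Icc 0 (s * p.1 + ℓ)} := by
    simp only [hQ, mem_Icc, and_assoc]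
  have hQmeas : MeasurableSet Q := hQ' ▸ measurableSet_region_between_cc measurable_const
    (g := fun x => s * x + ℓ) (by fun_prop) measurableSet_Icc
  calc _ = ∫ p in Q, ((ℓ * s / (s * p.1 + ℓ) ^ 2) ^ 2 * p.2 ^ 2 + (ℓ / (s * p.1 + ℓ)) ^ 2) := by
        refine setIntegral_congr_fun hQmeas fun p hp => ?_
        have hx : 0 ≤ p.1 := (hQ' ▸ hp).1.1
        exact sq_deriv_add_sq_deriv_mul_div_affine _ _ _ _ (by positivity)
    _ = ℓ ^ 2 * (s ^ 2 / 3 + 1) / s * log (ℓ₁ / ℓ) := by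
        rw [hQ', setIntegral_trapezoid_sq_div_affine _ _ _ _ hs hℓ hL.le, hsL, sub_add_cancel]
    _ ≤ ℓ ^ 2 * (s ^ 2 / 3 + 1) / s * ((ℓ₁ - ℓ) / ℓ) := by
        gcongr
        exact (log_le_sub_one_of_pos (div_pos (hℓ.trans hℓ₁) hℓ)).trans_eq (by field_simp)
    _ = (L + (ℓ₁ - ℓ) ^ 2 / (3 * L)) * ℓ := by
        rw [← hsL]; field_simp; ring
    _ ≤ (L + L₁ ^ 2 / (3 * L)) * ℓ := by
        gcongr
        linarith

/-- Let `L > 0`, `L₁ > 0` and `0 < ℓ < ℓ₁ ≤ L₁`. On the Euclidean trapezoid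
`Q = {(x,y) : 0 ≤ x ≤ L, 0 ≤ y ≤ ((ℓ₁ - ℓ)/L) x + ℓ}`, the Dirichlet integral of
`v (x,y) = ℓ y / (((ℓ₁ - ℓ)/L) x + ℓ)` is at most `(L + L₁²/(3 L)) * ℓ`. -/
theorem stmt_4 (L L₁ ℓ ℓ₁ : ℝ) (hL : 0 < L) (hL₁ : 0 < L₁)
    (hℓ : 0 < ℓ) (hℓ₁ : ℓ < ℓ₁) (hℓ₁L₁ : ℓ₁ ≤ L₁)
    (Q : Set (ℝ × ℝ))
    (hQ : Q = {p : ℝ × ℝ | 0 ≤ p.1 ∧ p.1 ≤ L ∧ 0 ≤ p.2 ∧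
      p.2 ≤ ((ℓ₁ - ℓ) / L) * p.1 + ℓ})
    (v : ℝ × ℝ → ℝ)
    (hv : v = fun p : ℝ × ℝ => ℓ * p.2 / (((ℓ₁ - ℓ) / L) * p.1 + ℓ)) :
    (∫ p in Q, ((deriv (fun x : ℝ => v (x, p.2)) p.1) ^ 2 +
        (deriv (fun y : ℝ => v (p.1, y)) p.2) ^ 2)) ≤
      (L + L₁ ^ 2 / (3 * L)) * ℓ :=
  stmt_4_general L L₁ ℓ ℓ₁ hL hℓ hℓ₁ hℓ₁L₁ Q hQ v hv
end

section
/- Let M be a matching of the rooted infinite binary tree (a set of edges no two of which share a vertex). Let C₀ ≥ 1 and C ≥ 1, and let ψ : {1, 2, 3, …} → (0, ∞) satisfy ψ(n+1) ≤ C·ψ(n) for all n ≥ 1 and ∑_{n ≥ 1} 1/ψ(n) = ∞. Let a assign a positive conductance to every edge with a(e) ≤ C₀ for every edge e, and a(e) ≤ ψ(n)/2^n for every e ∈ E_n \ M. Then there is no unit flow from the root of finite energy. -/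
/-!
Let `Πₙ` consist of the level-`n` edges outside `M` together with the children of the matched
level-`n` edges. It separates the root from infinity, so a unit flow sends total flux `1`
through it, and children of matched edges are unmatched, so `Πₙ ⊆ (Eₙ ∪ Eₙ₊₁) \ M` has total
conductance at most `ψ n + ψ (n + 1) ≤ (1 + C) ψ n`. By Cauchy–Schwarz the energy of the flow
on `Πₙ` is at least `1 / (ψ n + ψ (n + 1))`. Every edge lies in at most two of the `Πₙ`, so
twice the energy dominates `∑ 1 / ((1 + C) ψ n) = ∞`.
-/

open Finset
open scoped ENNReal

namespace RootedBinaryTree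

def children (v : List Bool) : Finset (List Bool) := {v ++ [true], v ++ [false]}

/-- The strings of length `n`, i.e. the endpoints of the edges in `E n`. -/
def level : ℕ → Finset (List Bool)
  | 0 => {[]}
  | n + 1 => (level n).biUnion children

lemma length_of_mem_level {n : ℕ} {v : List Bool} (hv : v ∈ level n) : v.length = n := by
  induction n generalizing v with
  | zero => simp_all [level]
  | succ n ih =>
    obtain ⟨w, hw, hvw⟩ := mem_biUnion.mp hv
    simp only [children, mem_insert, mem_singleton] at hvw
    rcases hvw with rfl | rfl <;> simp [ih hw]

lemma ne_nil_of_mem_level_succ {n : ℕ} {v : List Bool} (hv : v ∈ level (n + 1)) : v ≠ [] := by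
  rintro rfl
  simpa using length_of_mem_level hv

lemma disjoint_level_of_ne {m n : ℕ} (h : m ≠ n) : Disjoint (level m) (level n) :=
  disjoint_left.mpr fun _ hm hn => h ((length_of_mem_level hm).symm.trans (length_of_mem_level hn))

lemma card_level_le (n : ℕ) : #(level n) ≤ 2 ^ n := by
  induction n with
  | zero => simp [level]
  | succ n ih =>
    calc #(level (n + 1)) ≤ ∑ v ∈ level n, #(children v) := card_biUnion_le
      _ ≤ ∑ _v ∈ level n, 2 := sum_le_sum fun v _ => card_le_two
      _ ≤ 2 ^ (n + 1) := by rw [sum_const, smul_eq_mul, pow_succ]; omega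

lemma sum_children {β : Type*} [AddCommMonoid β] (v : List Bool) (g : List Bool → β) :
    ∑ u ∈ children v, g u = g (v ++ [true]) + g (v ++ [false]) :=
  sum_pair (by simp)

lemma sum_biUnion_children {β : Type*} [AddCommMonoid β] (s : Finset (List Bool))
    (g : List Bool → β) :
    ∑ u ∈ s.biUnion children, g u = ∑ v ∈ s, (g (v ++ [true]) + g (v ++ [false])) := by
  rw [sum_biUnion]
  · exact sum_congr rfl fun v _ => sum_children v g
  · intro v _ w _ hvw
    refine disjoint_left.mpr fun u hv hw => hvw ?_
    simp only [children, mem_insert, mem_singleton] at hv hw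
    rcases hv with rfl | rfl <;> rcases hw with h | h <;> exact (List.append_inj' h rfl).1

lemma biUnion_children_subset_level {s : Finset (List Bool)} {n : ℕ} (hs : s ⊆ level n) :
    s.biUnion children ⊆ level (n + 1) :=
  biUnion_subset_biUnion_of_subset_left _ hs

lemma sum_le_of_subset_level {a : List Bool → ℝ} {s : Finset (List Bool)} {n : ℕ} {c : ℝ}
    (hs : s ⊆ level n) (hc : 0 ≤ c) (ha : ∀ u ∈ s, a u ≤ c / 2 ^ n) :
    ∑ u ∈ s, a u ≤ c := by
  have hcard : (#s : ℝ) ≤ 2 ^ n := by exact_mod_cast (card_le_card hs).trans (card_level_le n)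
  calc ∑ u ∈ s, a u ≤ #s • (c / 2 ^ n) := sum_le_card_nsmul _ _ _ ha
    _ ≤ 2 ^ n * (c / 2 ^ n) := by rw [nsmul_eq_mul]; gcongr
    _ = c := by field_simp

lemma tsum_sum_level_le (g : List Bool → ℝ≥0∞) :
    ∑' n, ∑ v ∈ level (n + 1), g v ≤ ∑' v : {l : List Bool // l ≠ []}, g v := by
  let e : (Σ n, level (n + 1)) → {l : List Bool // l ≠ []} :=
    fun x => ⟨x.2, ne_nil_of_mem_level_succ x.2.2⟩
  have he : Function.Injective e := by
    rintro ⟨m, u, hu⟩ ⟨n, w, hw⟩ h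
    obtain rfl : u = w := congrArg Subtype.val h
    obtain rfl : m = n := by
      simpa using (length_of_mem_level hu).symm.trans (length_of_mem_level hw)
    rfl
  calc ∑' n, ∑ v ∈ level (n + 1), g v = ∑' x : Σ n, level (n + 1), g (e x) := by
        rw [ENNReal.tsum_sigma']
        exact tsum_congr fun n => (sum_attach _ _).symm.trans (tsum_fintype _).symm
    _ ≤ _ := ENNReal.tsum_comp_le_tsum_of_injective he (fun v => g v)

section Flow

variable {f : List Bool → ℝ} (hflow : ∀ v, v ≠ [] → f v = f (v ++ [true]) + f (v ++ [false]))
include hflow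

lemma sum_biUnion_children_flow {s : Finset (List Bool)} (hs : ∀ v ∈ s, v ≠ []) :
    ∑ u ∈ s.biUnion children, f u = ∑ v ∈ s, f v := by
  rw [sum_biUnion_children]
  exact sum_congr rfl fun v hv => (hflow v (hs v hv)).symm

lemma sum_level_flow (hroot : f [true] + f [false] = 1) (n : ℕ) :
    ∑ v ∈ level (n + 1), f v = 1 := by
  induction n with
  | zero => simpa [level, sum_children] using hroot
  | succ n ih =>
    rw [← ih]
    exact sum_biUnion_children_flow hflow fun v => ne_nil_of_mem_level_succ

end Flow

section Cutset

open Classical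

variable {M : Set (List Bool)}

noncomputable def cutset (M : Set (List Bool)) (n : ℕ) : Finset (List Bool) :=
  {v ∈ level n | v ∉ M} ∪ {v ∈ level n | v ∈ M}.biUnion children

lemma cutset_subset (n : ℕ) : cutset M n ⊆ level n ∪ level (n + 1) :=
  union_subset_union (filter_subset _ _) (biUnion_children_subset_level (filter_subset _ _))

lemma disjoint_cutset_parts (n : ℕ) :
    Disjoint {v ∈ level n | v ∉ M} ({v ∈ level n | v ∈ M}.biUnion children) :=
  (disjoint_level_of_ne n.succ_ne_self.symm).mono (filter_subset _ _)
    (biUnion_children_subset_level (filter_subset _ _))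

lemma sum_cutset_flow {f : List Bool → ℝ}
    (hflow : ∀ v, v ≠ [] → f v = f (v ++ [true]) + f (v ++ [false]))
    (hroot : f [true] + f [false] = 1) (n : ℕ) :
    ∑ u ∈ cutset M (n + 1), f u = 1 := by
  rw [cutset, sum_union (disjoint_cutset_parts _), sum_biUnion_children_flow hflow
    fun v hv => ne_nil_of_mem_level_succ (mem_filter.mp hv).1,
    sum_filter_not_add_sum_filter, sum_level_flow hflow hroot]

lemma append_singleton_notMem_of_matching
    (hM : ∀ v ∈ M, ∀ w ∈ M, v ≠ w → v ≠ w.dropLast) {v : List Bool} (hv : v ∈ M) (b : Bool) :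
    v ++ [b] ∉ M := fun hvb =>
  hM v hv _ hvb (by simp) (by simp)

lemma notMem_of_mem_cutset (hM : ∀ v ∈ M, ∀ b, v ++ [b] ∉ M) {n : ℕ} {u : List Bool}
    (hu : u ∈ cutset M n) : u ∉ M := by
  rcases mem_union.mp hu with hu | hu
  · exact (mem_filter.mp hu).2
  · obtain ⟨v, hv, hvu⟩ := mem_biUnion.mp hu
    simp only [children, mem_insert, mem_singleton] at hvu
    rcases hvu with rfl | rfl <;> exact hM v (mem_filter.mp hv).2 _

lemma ne_nil_of_mem_cutset_succ {n : ℕ} {u : List Bool} (hu : u ∈ cutset M (n + 1)) : u ≠ [] := by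
  rcases mem_union.mp (cutset_subset _ hu) with hu | hu <;> exact ne_nil_of_mem_level_succ hu

lemma sum_cutset_le (hM : ∀ v ∈ M, ∀ b, v ++ [b] ∉ M) {a : List Bool → ℝ} {ψ : ℕ → ℝ}
    (hψ : ∀ k, 1 ≤ k → 0 < ψ k)
    (ha : ∀ k, 1 ≤ k → ∀ v : List Bool, v.length = k → v ∉ M → a v ≤ ψ k / 2 ^ k) (n : ℕ) :
    ∑ u ∈ cutset M (n + 1), a u ≤ ψ (n + 1) + ψ (n + 2) := by
  have bound (k : ℕ) (hk : 1 ≤ k) (s : Finset (List Bool)) (hs : s ⊆ level k)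
      (hsM : ∀ u ∈ s, u ∉ M) : ∑ u ∈ s, a u ≤ ψ k :=
    sum_le_of_subset_level hs (hψ k hk).le fun u hu =>
      ha k hk u (length_of_mem_level (hs hu)) (hsM u hu)
  have hsM (k : ℕ) : ∀ u ∈ cutset M (n + 1) ∩ level k, u ∉ M :=
    fun u hu => notMem_of_mem_cutset hM (mem_inter.mp hu).1
  rw [← inter_eq_left.mpr (cutset_subset (n + 1)), inter_union_distrib_left,
    sum_union ((disjoint_level_of_ne (by omega)).mono inter_subset_right inter_subset_right)]
  exact add_le_add (bound _ (by omega) _ inter_subset_right (hsM _))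
    (bound _ (by omega) _ inter_subset_right (hsM _))

lemma one_div_le_sum_cutset_energy (hM : ∀ v ∈ M, ∀ b, v ++ [b] ∉ M) {a : List Bool → ℝ}
    {ψ : ℕ → ℝ} (hψ : ∀ k, 1 ≤ k → 0 < ψ k)
    (ha : ∀ k, 1 ≤ k → ∀ v : List Bool, v.length = k → v ∉ M → a v ≤ ψ k / 2 ^ k)
    (hapos : ∀ v : List Bool, v ≠ [] → 0 < a v) {f : List Bool → ℝ}
    (hflow : ∀ v, v ≠ [] → f v = f (v ++ [true]) + f (v ++ [false]))
    (hroot : f [true] + f [false] = 1) (n : ℕ) :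
    1 / (ψ (n + 1) + ψ (n + 2)) ≤ ∑ u ∈ cutset M (n + 1), f u ^ 2 / a u := by
  have hpos : ∀ u ∈ cutset M (n + 1), 0 < a u := fun u hu => hapos u (ne_nil_of_mem_cutset_succ hu)
  have hflux := sum_cutset_flow (M := M) hflow hroot n
  have hne : (cutset M (n + 1)).Nonempty := nonempty_of_sum_ne_zero (hflux ▸ one_ne_zero)
  calc 1 / (ψ (n + 1) + ψ (n + 2)) ≤ 1 / ∑ u ∈ cutset M (n + 1), a u :=
        one_div_le_one_div_of_le (sum_pos hpos hne) (sum_cutset_le hM hψ ha n)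
    _ = (∑ u ∈ cutset M (n + 1), f u) ^ 2 / ∑ u ∈ cutset M (n + 1), a u := by rw [hflux, one_pow]
    _ ≤ ∑ u ∈ cutset M (n + 1), f u ^ 2 / a u := sq_sum_div_le_sum_sq_div _ _ hpos

-- Each edge lies in at most two of the cutsets.
lemma tsum_sum_cutset_le (g : List Bool → ℝ≥0∞) :
    ∑' n, ∑ u ∈ cutset M (n + 1), g u ≤ 2 * ∑' v : {l : List Bool // l ≠ []}, g v := by
  let L : ℕ → ℝ≥0∞ := fun n => ∑ v ∈ level (n + 1), g v
  calc ∑' n, ∑ u ∈ cutset M (n + 1), g u ≤ ∑' n, (L n + L (n + 1)) :=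
        ENNReal.tsum_le_tsum fun n => (sum_le_sum_of_subset (cutset_subset _)).trans
          (sum_union (disjoint_level_of_ne (by omega))).le
    _ = ∑' n, L n + ∑' n, L (n + 1) := ENNReal.tsum_add
    _ ≤ ∑' v : {l : List Bool // l ≠ []}, g v + ∑' v : {l : List Bool // l ≠ []}, g v :=
        add_le_add (tsum_sum_level_le g)
          ((ENNReal.tsum_comp_le_tsum_of_injective (add_left_injective 1) L).trans
            (tsum_sum_level_le g))
    _ = 2 * ∑' v : {l : List Bool // l ≠ []}, g v := (two_mul _).symm

end Cutset

lemma summable_one_div_of_summable_one_div_add {ψ : ℕ → ℝ} {C : ℝ} (hψ : ∀ k, 1 ≤ k → 0 < ψ k)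
    (hgrowth : ∀ k, 1 ≤ k → ψ (k + 1) ≤ C * ψ k)
    (h : Summable fun n => 1 / (ψ (n + 1) + ψ (n + 2))) : Summable fun n => 1 / ψ (n + 1) :=
  (h.mul_left (1 + C)).of_nonneg_of_le (fun n => (one_div_pos.mpr (hψ _ (by omega))).le)
    fun n => by
      have h₁ := hψ (n + 1) (by omega)
      have h₂ := hψ (n + 2) (by omega)
      rw [mul_one_div, div_le_div_iff₀ h₁ (by positivity)]
      linarith [hgrowth (n + 1) (by omega)]

end RootedBinaryTree

open RootedBinaryTree in
theorem stmt_16_general (M : Set (List Bool))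
    (hmatching : ∀ v ∈ M, ∀ w ∈ M, v ≠ w →
      v ≠ w.dropLast ∧ w ≠ v.dropLast ∧ v.dropLast ≠ w.dropLast)
    (C : ℝ)
    (ψ : ℕ → ℝ) (hψpos : ∀ n : ℕ, 1 ≤ n → 0 < ψ n)
    (hψgrowth : ∀ n : ℕ, 1 ≤ n → ψ (n + 1) ≤ C * ψ n)
    (hψdiv : ¬ Summable fun n : ℕ => 1 / ψ (n + 1))
    (a : List Bool → ℝ) (hapos : ∀ v : List Bool, v ≠ [] → 0 < a v)
    (haψ : ∀ n : ℕ, 1 ≤ n → ∀ v : List Bool, v.length = n → v ∉ M →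
      a v ≤ ψ n / 2 ^ n) :
    ¬ ∃ f : List Bool → ℝ,
        (∀ v : List Bool, v ≠ [] → f v = f (v ++ [true]) + f (v ++ [false])) ∧
        f [true] + f [false] = 1 ∧
        (∑' v : {l : List Bool // l ≠ []}, ENNReal.ofReal (f v.1 ^ 2 / a v.1)) < ⊤ := by
  rintro ⟨f, hflow, hroot, henergy⟩
  have hM : ∀ v ∈ M, ∀ b, v ++ [b] ∉ M := fun v hv =>
    append_singleton_notMem_of_matching (fun v hv w hw hvw => (hmatching v hv w hw hvw).1) hv
  have hcut (n : ℕ) : ENNReal.ofReal (1 / (ψ (n + 1) + ψ (n + 2))) ≤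
      ∑ u ∈ cutset M (n + 1), ENNReal.ofReal (f u ^ 2 / a u) := by
    rw [← ENNReal.ofReal_sum_of_nonneg fun u hu =>
      div_nonneg (sq_nonneg _) (hapos u (ne_nil_of_mem_cutset_succ hu)).le]
    exact ENNReal.ofReal_le_ofReal (one_div_le_sum_cutset_energy hM hψpos haψ hapos hflow hroot n)
  have hfin : ∑' n, ENNReal.ofReal (1 / (ψ (n + 1) + ψ (n + 2))) ≠ ⊤ :=
    ne_top_of_le_ne_top (ENNReal.mul_ne_top ENNReal.ofNat_ne_top henergy.ne)
      ((ENNReal.tsum_le_tsum hcut).trans (tsum_sum_cutset_le _))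
  refine hψdiv (summable_one_div_of_summable_one_div_add hψpos hψgrowth ?_)
  refine (ENNReal.summable_toReal hfin).congr fun n => ENNReal.toReal_ofReal ?_
  have := hψpos (n + 1) (by omega)
  have := hψpos (n + 2) (by omega)
  positivity

/-- Key claim in Theorem 1.5(iii): let `M` be a matching of the rooted infinite binary
tree (a set of edges, no two sharing a vertex; an edge is identified with the nonempty
binary string `v` it leads to, and joins `v.dropLast` to `v`).  Let `C₀ ≥ 1`, `C ≥ 1`,
and let `ψ : ℕ → (0,∞)` satisfy `ψ (n+1) ≤ C ψ n` for all `n ≥ 1` and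
`∑_{n ≥ 1} 1/ψ n = ∞`.  If the conductances satisfy `a e ≤ C₀` everywhere and
`a e ≤ ψ n / 2 ^ n` for every `e ∈ E n \ M`, then there is no unit flow from the root
of finite energy. -/
theorem stmt_16 (M : Set (List Bool)) (hMne : ∀ v ∈ M, v ≠ [])
    (hmatching : ∀ v ∈ M, ∀ w ∈ M, v ≠ w →
      v ≠ w.dropLast ∧ w ≠ v.dropLast ∧ v.dropLast ≠ w.dropLast)
    (C₀ C : ℝ) (hC₀ : 1 ≤ C₀) (hC : 1 ≤ C)
    (ψ : ℕ → ℝ) (hψpos : ∀ n : ℕ, 1 ≤ n → 0 < ψ n)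
    (hψgrowth : ∀ n : ℕ, 1 ≤ n → ψ (n + 1) ≤ C * ψ n)
    (hψdiv : ¬ Summable fun n : ℕ => 1 / ψ (n + 1))
    (a : List Bool → ℝ) (hapos : ∀ v : List Bool, v ≠ [] → 0 < a v)
    (haC₀ : ∀ v : List Bool, v ≠ [] → a v ≤ C₀)
    (haψ : ∀ n : ℕ, 1 ≤ n → ∀ v : List Bool, v.length = n → v ∉ M →
      a v ≤ ψ n / 2 ^ n) :
    ¬ ∃ f : List Bool → ℝ,
        (∀ v : List Bool, v ≠ [] → f v = f (v ++ [true]) + f (v ++ [false])) ∧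
        f [true] + f [false] = 1 ∧
        (∑' v : {l : List Bool // l ≠ []}, ENNReal.ofReal (f v.1 ^ 2 / a v.1)) < ⊤ :=
  stmt_16_general M hmatching C ψ hψpos hψgrowth hψdiv a hapos haψ
end
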